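/- Two irreducible weight-n G-modules W_{y,χ} and W_{y',χ'} (constructed from y, y' ∈ K₂ and characters χ, χ' of ker π_n, with the same section σ) are isomorphic if and only if y − y' ∈ image π_n and χ = χ'. -/
import Mathlib


abbrev ThetaK1 (p : ℕ) (d : Fin p → ℕ) : Type := ∀ i : Fin p, Multiplicative (ZMod (d i))

abbrev ThetaK2 (k : Type) [Field k] (p : ℕ) (d : Fin p → ℕ) : Type := ThetaK1 p d →* kˣ

def Heis (k : Type) [Field k] (p : ℕ) (d : Fin p → ℕ) : Type :=
  kˣ × ThetaK1 p d × ThetaK2 k p d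

namespace Heis

variable {k : Type} [Field k] {p : ℕ} {d : Fin p → ℕ}

def mk (α : kˣ) (x : ThetaK1 p d) (χ : ThetaK2 k p d) : Heis k p d := (α, x, χ)

instance : Mul (Heis k p d) :=
  ⟨fun a b => (a.1 * b.1 * b.2.2 a.2.1, a.2.1 * b.2.1, a.2.2 * b.2.2)⟩

instance : One (Heis k p d) := ⟨((1 : kˣ), 1, 1)⟩

instance : Inv (Heis k p d) := ⟨fun a => (a.1⁻¹ * a.2.2 a.2.1, a.2.1⁻¹, a.2.2⁻¹)⟩

theorem mul_def (a b : Heis k p d) :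
    a * b = (a.1 * b.1 * b.2.2 a.2.1, a.2.1 * b.2.1, a.2.2 * b.2.2) := rfl

theorem one_def : (1 : Heis k p d) = ((1 : kˣ), 1, 1) := rfl

theorem inv_def (a : Heis k p d) :
    a⁻¹ = (a.1⁻¹ * a.2.2 a.2.1, a.2.1⁻¹, a.2.2⁻¹) := rfl

theorem mul_assoc' (a b c : Heis k p d) : a * b * c = a * (b * c) := by
  obtain ⟨α, x, χ⟩ := a
  obtain ⟨β, y, ψ⟩ := b
  obtain ⟨γ, z, ω⟩ := c
  refine Prod.ext ?_ (Prod.ext ?_ ?_)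
  · show α * β * ψ x * γ * (ω (x * y)) = α * (β * γ * ω y) * ((ψ * ω) x)
    simp [map_mul, MonoidHom.mul_apply, mul_assoc, mul_comm, mul_left_comm]
  · exact mul_assoc x y z
  · exact mul_assoc χ ψ ω

theorem one_mul' (a : Heis k p d) : 1 * a = a := by
  obtain ⟨α, x, χ⟩ := a
  refine Prod.ext ?_ (Prod.ext ?_ ?_)
  · show 1 * α * χ 1 = α
    simp
  · exact one_mul x
  · exact one_mul χ

theorem mul_one' (a : Heis k p d) : a * 1 = a := by
  obtain ⟨α, x, χ⟩ := a
  refine Prod.ext ?_ (Prod.ext ?_ ?_)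
  · show α * 1 * (1 : ThetaK2 k p d) x = α
    simp
  · exact mul_one x
  · exact mul_one χ

theorem inv_mul_cancel' (a : Heis k p d) : a⁻¹ * a = 1 := by
  obtain ⟨α, x, χ⟩ := a
  refine Prod.ext ?_ (Prod.ext ?_ ?_)
  · show α⁻¹ * χ x * α * χ (x⁻¹) = 1
    simp [map_inv, mul_comm, mul_left_comm]
  · exact inv_mul_cancel x
  · exact inv_mul_cancel χ

instance : Group (Heis k p d) where
  mul_assoc := mul_assoc'
  one_mul := one_mul'
  mul_one := mul_one'
  inv_mul_cancel := inv_mul_cancel'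

/-- The multiplication rule of the Heisenberg-type group. -/
theorem mk_mul (α β : kˣ) (x y : ThetaK1 p d) (χ ψ : ThetaK2 k p d) :
    mk α x χ * mk β y ψ = mk (α * β * ψ x) (x * y) (χ * ψ) := rfl

end Heis

section Reps

variable {k : Type} [Field k]

/-- A subspace stable under a representation. -/
def RepStable {G V : Type} [Group G] [AddCommGroup V] [Module k V]
    (ρ : G →* (V →ₗ[k] V)ˣ) (W : Submodule k V) : Prop :=
  ∀ (g : G), ∀ w ∈ W, (ρ g : V →ₗ[k] V) w ∈ W

/-- Irreducibility: nonzero and no nontrivial stable subspace. -/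
def RepIrred {G V : Type} [Group G] [AddCommGroup V] [Module k V]
    (ρ : G →* (V →ₗ[k] V)ˣ) : Prop :=
  (∃ v : V, v ≠ 0) ∧
  ∀ W : Submodule k V, RepStable ρ W → W = ⊥ ∨ W = ⊤

/-- Isomorphism of representations of `G`. -/
def RepIso {G V W : Type} [Group G] [AddCommGroup V] [Module k V]
    [AddCommGroup W] [Module k W]
    (ρ : G →* (V →ₗ[k] V)ˣ) (τ : G →* (W →ₗ[k] W)ˣ) : Prop :=
  ∃ e : V ≃ₗ[k] W, ∀ (g : G) (v : V), e ((ρ g : V →ₗ[k] V) v) = (τ g : W →ₗ[k] W) (e v)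

variable {p : ℕ} {d : Fin p → ℕ}

/-- A representation of the Heisenberg-type group has weight `n` if `kˣ ⊆ G` acts through the
character `α ↦ αⁿ`. -/
def IsWeight (n : ℤ) {V : Type} [AddCommGroup V] [Module k V]
    (ρ : Heis k p d →* (V →ₗ[k] V)ˣ) : Prop :=
  ∀ (α : kˣ) (v : V), (ρ (Heis.mk α 1 1) : V →ₗ[k] V) v = ((α ^ n : kˣ) : k) • v

/-- `D n = (d₁⋯d_p)/(gcd(n,d₁)⋯gcd(n,d_p))`. -/
def ThetaD (p : ℕ) (d : Fin p → ℕ) (n : ℤ) : ℕ :=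
  (∏ i, d i) / ∏ i, Int.gcd n (d i)

end Reps

section Wn

variable {k : Type} [Field k] {p : ℕ} {d : Fin p → ℕ}

/-- `π_n : K₂ → K₂`, `y ↦ yⁿ`. -/
def piN (n : ℤ) : ThetaK2 k p d →* ThetaK2 k p d where
  toFun y := y ^ n
  map_one' := by
    show (1 : ThetaK2 k p d) ^ n = 1
    exact one_zpow (α := ThetaK2 k p d) n
  map_mul' a b := by
    show (a * b) ^ n = a ^ n * b ^ n
    exact mul_zpow a b n

open scoped Classical in
/-- The standard basis vector `e_{y·z}` (indexed by `z ∈ image π_n`) of the space of functions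
on `image π_n`. -/
noncomputable def eVec (n : ℤ) (z : (piN (k := k) (p := p) (d := d) n).range) :
    ((piN (k := k) (p := p) (d := d) n).range → k) :=
  fun z' => if z' = z then 1 else 0

/-- The element `π_n w` of the image of `π_n`. -/
def rngElt (n : ℤ) (w : ThetaK2 k p d) : (piN (k := k) (p := p) (d := d) n).range :=
  ⟨piN n w, ⟨w, rfl⟩⟩

/-- The element `w · σ(z) · σ(z · π_n w)⁻¹` of `ker π_n`. -/
def kerElt (n : ℤ) (σ : (piN (k := k) (p := p) (d := d) n).range → ThetaK2 k p d)
    (hσ : ∀ z, piN n (σ z) = (z : ThetaK2 k p d))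
    (w : ThetaK2 k p d) (z : (piN (k := k) (p := p) (d := d) n).range) :
    (piN (k := k) (p := p) (d := d) n).ker :=
  ⟨w * σ z * (σ (z * rngElt n w))⁻¹, by
    have hinv : piN n ((σ (z * rngElt n w))⁻¹)
        = ((((z * rngElt n w) : (piN (k := k) (p := p) (d := d) n).range) :
            ThetaK2 k p d))⁻¹ := by
      have h := map_inv (piN (k := k) (p := p) (d := d) n) (σ (z * rngElt n w))
      rw [hσ (z * rngElt n w)] at h
      exact h
    rw [MonoidHom.mem_ker, map_mul, map_mul, hσ z, hinv]
    have hcoe : (((z * rngElt n w) : (piN (k := k) (p := p) (d := d) n).range) :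
        ThetaK2 k p d) = (z : ThetaK2 k p d) * piN n w := by simp [rngElt]
    rw [hcoe]
    exact mul_inv_eq_one.mpr (mul_comm (piN (k := k) (p := p) (d := d) n w) (z : ThetaK2 k p d))⟩

end Wn
section AuxStmt12

variable {k : Type} [Field k] {p : ℕ} {d : Fin p → ℕ} {n : ℤ}

lemma rngElt_one : rngElt (k := k) (p := p) (d := d) n 1 = 1 :=
  Subtype.ext (map_one _)

lemma rngElt_of_mem_ker {w : ThetaK2 k p d}
    (hw : w ∈ (piN (k := k) (p := p) (d := d) n).ker) :
    rngElt n w = 1 :=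
  Subtype.ext (MonoidHom.mem_ker.mp hw)

lemma kerElt_of_mem_ker (σ : ↥(piN (k := k) (p := p) (d := d) n).range → ThetaK2 k p d)
    (hσ : ∀ z, piN n (σ z) = (z : ThetaK2 k p d))
    {w : ThetaK2 k p d} (hw : w ∈ (piN (k := k) (p := p) (d := d) n).ker)
    (z : ↥(piN (k := k) (p := p) (d := d) n).range) :
    kerElt n σ hσ w z = ⟨w, hw⟩ := by
  apply Subtype.ext
  show w * σ z * (σ (z * rngElt n w))⁻¹ = w
  rw [rngElt_of_mem_ker hw, mul_one]
  exact mul_inv_cancel_right w (σ z)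

lemma kerElt_one (σ : ↥(piN (k := k) (p := p) (d := d) n).range → ThetaK2 k p d)
    (hσ : ∀ z, piN n (σ z) = (z : ThetaK2 k p d))
    (z : ↥(piN (k := k) (p := p) (d := d) n).range) :
    kerElt n σ hσ 1 z = 1 := by
  rw [kerElt_of_mem_ker σ hσ (map_one _) z]
  rfl

lemma finite_thetaK2 (hd0 : ∀ i, 0 < d i) : Finite (ThetaK2 k p d) := by
  haveI : ∀ i, NeZero (d i) := fun i => ⟨(hd0 i).ne'⟩
  haveI : Fintype (ThetaK1 p d) := Fintype.ofFinite _
  set N := Fintype.card (ThetaK1 p d) with hN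
  have key : ∀ (f : ThetaK2 k p d) (a : ThetaK1 p d), f a ∈ rootsOfUnity N k := by
    intro f a
    rw [mem_rootsOfUnity, ← map_pow, pow_card_eq_one, map_one]
  refine Finite.of_injective
    (fun f : ThetaK2 k p d => (fun a => (⟨f a, key f a⟩ : rootsOfUnity N k))) ?_
  intro f g h
  apply MonoidHom.ext
  intro a
  have := congrFun h a
  exact Subtype.ext_iff.mp this

end AuxStmt12
lemma aux_ac_cancel {G : Type} [CommGroup G] (u v a b c : G) :
    u * a * b⁻¹ * (v * b * c⁻¹) = u * v * a * c⁻¹ := by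
  calc u * a * b⁻¹ * (v * b * c⁻¹) = u * v * a * c⁻¹ * (b⁻¹ * b) := by
        simp [mul_comm, mul_left_comm, mul_assoc]
    _ = u * v * a * c⁻¹ := by rw [inv_mul_cancel, mul_one]

lemma aux_ac {G : Type} [CommGroup G] (w t a b b' c : G) :
    w * a * b⁻¹ * (t * b * c⁻¹) = t * a * b'⁻¹ * (w * b' * c⁻¹) := by
  rw [aux_ac_cancel, aux_ac_cancel, mul_comm w t]

/-- Two irreducible weight-`n` `G`-modules `W_{y,χ}` and `W_{y',χ'}`
(constructed from `y, y' ∈ K₂` and characters `χ, χ'` of `ker π_n`, with the same normalized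
section `σ`) are isomorphic if and only if `y − y' ∈ image π_n` (multiplicatively:
`y·y'⁻¹ ∈ image π_n`) and `χ = χ'`. -/
theorem stmt12 {k : Type} [Field k] [IsAlgClosed k] {p : ℕ} {d : Fin p → ℕ}
    (hd0 : ∀ i, 0 < d i) (hchain : ∀ i j : Fin p, i ≤ j → d i ∣ d j)
    (hchar : ∀ i, ¬ (ringChar k ∣ d i))
    (n : ℤ) (y y' : ThetaK2 k p d)
    (χ χ' : ↥(piN (k := k) (p := p) (d := d) n).ker →* kˣ)
    (σ : ↥(piN (k := k) (p := p) (d := d) n).range → ThetaK2 k p d)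
    (hσ : ∀ z, piN n (σ z) = (z : ThetaK2 k p d)) (hσ1 : σ 1 = 1)
    (ρ ρ' : Heis k p d →*
        ((↥(piN (k := k) (p := p) (d := d) n).range → k) →ₗ[k]
          (↥(piN (k := k) (p := p) (d := d) n).range → k))ˣ)
    (hρ : ∀ (α : kˣ) (x : ThetaK1 p d) (w : ThetaK2 k p d)
        (z : ↥(piN (k := k) (p := p) (d := d) n).range),
      (ρ (Heis.mk α x w) :
          (↥(piN (k := k) (p := p) (d := d) n).range → k) →ₗ[k]
            (↥(piN (k := k) (p := p) (d := d) n).range → k)) (eVec n z) =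
        ((α ^ n * (y * (z : ThetaK2 k p d)) x * χ (kerElt n σ hσ w z) : kˣ) : k) •
          eVec n (z * rngElt n w))
    (hρ' : ∀ (α : kˣ) (x : ThetaK1 p d) (w : ThetaK2 k p d)
        (z : ↥(piN (k := k) (p := p) (d := d) n).range),
      (ρ' (Heis.mk α x w) :
          (↥(piN (k := k) (p := p) (d := d) n).range → k) →ₗ[k]
            (↥(piN (k := k) (p := p) (d := d) n).range → k)) (eVec n z) =
        ((α ^ n * (y' * (z : ThetaK2 k p d)) x * χ' (kerElt n σ hσ w z) : kˣ) : k) •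
          eVec n (z * rngElt n w)) :
    RepIso ρ ρ' ↔ (y * y'⁻¹ ∈ (piN (k := k) (p := p) (d := d) n).range ∧ χ = χ') := by
  classical
  haveI : ∀ i, NeZero (d i) := fun i => ⟨(hd0 i).ne'⟩
  haveI : Finite (ThetaK2 k p d) := finite_thetaK2 hd0
  haveI : Fintype ↥(piN (k := k) (p := p) (d := d) n).range := Fintype.ofFinite _
  have hsum : ∀ f : ↥(piN (k := k) (p := p) (d := d) n).range → k,
      ∑ z, f z • eVec n z = f := by
    intro f
    funext z'
    simp [eVec, Finset.sum_apply]
  constructor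
  · rintro ⟨e, he⟩
    have hne : e (eVec n 1) ≠ 0 := by
      intro h0
      have h1 : eVec (k := k) (p := p) (d := d) n 1 = 0 := by
        apply e.injective
        rw [h0, map_zero]
      have h2 := congrFun h1 1
      simp [eVec] at h2
    obtain ⟨z₀, hz₀⟩ : ∃ z, e (eVec n 1) z ≠ 0 := by
      by_contra hcon
      push_neg at hcon
      exact hne (funext hcon)
    have heval : ∀ (x : ThetaK1 p d) (w : ThetaK2 k p d), rngElt n w = 1 →
        ∀ (f : ↥(piN (k := k) (p := p) (d := d) n).range → k)
          (z : ↥(piN (k := k) (p := p) (d := d) n).range),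
        ((ρ' (Heis.mk 1 x w) :
          (↥(piN (k := k) (p := p) (d := d) n).range → k) →ₗ[k]
            (↥(piN (k := k) (p := p) (d := d) n).range → k)) f) z
          = (((y' * (z : ThetaK2 k p d)) x : kˣ) : k)
            * ((χ' (kerElt n σ hσ w z) : kˣ) : k) * f z := by
      intro x w hw f z
      conv_lhs => rw [← hsum f]
      rw [map_sum, Finset.sum_apply]
      have hterm : ∀ z' : ↥(piN (k := k) (p := p) (d := d) n).range,
          ((ρ' (Heis.mk 1 x w) :
            (↥(piN (k := k) (p := p) (d := d) n).range → k) →ₗ[k]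
              (↥(piN (k := k) (p := p) (d := d) n).range → k)) (f z' • eVec n z')) z
          = (((y' * (z' : ThetaK2 k p d)) x : kˣ) : k)
            * ((χ' (kerElt n σ hσ w z') : kˣ) : k) * f z' * eVec n z' z := by
        intro z'
        rw [map_smul, hρ' 1 x w z', hw, mul_one]
        simp only [Pi.smul_apply, smul_eq_mul, one_zpow, one_mul, Units.val_mul]
        ring
      rw [Finset.sum_congr rfl (fun z' _ => hterm z')]
      simp [eVec]
    have hyz : ∀ x : ThetaK1 p d, y x = (y' * (z₀ : ThetaK2 k p d)) x := by
      intro x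
      have h1 := congrFun (he (Heis.mk 1 x 1) (eVec n 1)) z₀
      rw [hρ 1 x 1 1, heval x 1 rngElt_one (e (eVec n 1)) z₀] at h1
      rw [kerElt_one σ hσ, kerElt_one σ hσ, rngElt_one, mul_one] at h1
      simp only [map_one, one_zpow, one_mul, mul_one, Units.val_one, OneMemClass.coe_one,
        map_smul, Pi.smul_apply, smul_eq_mul] at h1
      exact Units.ext (mul_right_cancel₀ hz₀ h1)
    have hy : y = y' * (z₀ : ThetaK2 k p d) := MonoidHom.ext hyz
    have hχω : ∀ ω : ↥(piN (k := k) (p := p) (d := d) n).ker, χ ω = χ' ω := by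
      intro ω
      have h1 := congrFun (he (Heis.mk 1 1 (ω : ThetaK2 k p d)) (eVec n 1)) z₀
      rw [hρ 1 1 (ω : ThetaK2 k p d) 1,
        heval 1 (ω : ThetaK2 k p d) (rngElt_of_mem_ker ω.2) (e (eVec n 1)) z₀] at h1
      rw [kerElt_of_mem_ker σ hσ ω.2, kerElt_of_mem_ker σ hσ ω.2,
        rngElt_of_mem_ker ω.2, mul_one] at h1
      simp only [map_one, one_zpow, one_mul, mul_one, Units.val_one, OneMemClass.coe_one,
        map_smul, Pi.smul_apply, smul_eq_mul] at h1
      exact Units.ext (mul_right_cancel₀ hz₀ h1)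
    refine ⟨?_, MonoidHom.ext hχω⟩
    have : y * y'⁻¹ = (z₀ : ThetaK2 k p d) := by
      rw [hy]
      exact mul_inv_cancel_comm y' (z₀ : ThetaK2 k p d)
    rw [this]
    exact z₀.2
  · rintro ⟨⟨t, ht⟩, hχ⟩
    subst hχ
    have hyu : y = (piN (k := k) (p := p) (d := d) n t) * y' := by
      rw [ht]
      exact (inv_mul_cancel_right y y').symm
    let E : (↥(piN (k := k) (p := p) (d := d) n).range → k) →ₗ[k]
        (↥(piN (k := k) (p := p) (d := d) n).range → k) :=
      { toFun := fun f z =>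
          ((χ (kerElt n σ hσ t (z * (rngElt n t)⁻¹)) : kˣ) : k) * f (z * (rngElt n t)⁻¹)
        map_add' := fun f g => by funext z; simp [mul_add]
        map_smul' := fun a f => by funext z; simp [smul_eq_mul]; ring }
    let E' : (↥(piN (k := k) (p := p) (d := d) n).range → k) →ₗ[k]
        (↥(piN (k := k) (p := p) (d := d) n).range → k) :=
      { toFun := fun f z =>
          (((χ (kerElt n σ hσ t z))⁻¹ : kˣ) : k) * f (z * rngElt n t)
        map_add' := fun f g => by funext z; simp [mul_add]
        map_smul' := fun a f => by funext z; simp [smul_eq_mul]; ring }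
    have hEE' : E.comp E' = LinearMap.id := by
      apply LinearMap.ext
      intro f
      funext z
      show ((χ (kerElt n σ hσ t (z * (rngElt n t)⁻¹)) : kˣ) : k)
          * ((((χ (kerElt n σ hσ t (z * (rngElt n t)⁻¹)))⁻¹ : kˣ) : k)
            * f (z * (rngElt n t)⁻¹ * rngElt n t)) = f z
      rw [inv_mul_cancel_right, ← mul_assoc, ← Units.val_mul, mul_inv_cancel,
        Units.val_one, one_mul]
    have hE'E : E'.comp E = LinearMap.id := by
      apply LinearMap.ext
      intro f
      funext z
      show (((χ (kerElt n σ hσ t z))⁻¹ : kˣ) : k)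
          * (((χ (kerElt n σ hσ t (z * rngElt n t * (rngElt n t)⁻¹)) : kˣ) : k)
            * f (z * rngElt n t * (rngElt n t)⁻¹)) = f z
      rw [mul_inv_cancel_right, ← mul_assoc, ← Units.val_mul, inv_mul_cancel,
        Units.val_one, one_mul]
    have hEvec : ∀ z : ↥(piN (k := k) (p := p) (d := d) n).range,
        E (eVec n z) = ((χ (kerElt n σ hσ t z) : kˣ) : k) • eVec n (z * rngElt n t) := by
      intro z
      funext z'
      show ((χ (kerElt n σ hσ t (z' * (rngElt n t)⁻¹)) : kˣ) : k)
          * eVec n z (z' * (rngElt n t)⁻¹)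
          = ((χ (kerElt n σ hσ t z) : kˣ) : k) * eVec n (z * rngElt n t) z'
      by_cases h : z' = z * rngElt n t
      · subst h
        rw [mul_inv_cancel_right]
        simp [eVec]
      · have h2 : z' * (rngElt n t)⁻¹ ≠ z := by
          intro hh
          exact h (by rw [← hh, inv_mul_cancel_right])
        simp [eVec, h, h2]
    refine ⟨LinearEquiv.ofLinear E E' hEE' hE'E, ?_⟩
    intro g v
    obtain ⟨α, x, w⟩ := g
    have key : E ∘ₗ (ρ (Heis.mk α x w) :
          (↥(piN (k := k) (p := p) (d := d) n).range → k) →ₗ[k]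
            (↥(piN (k := k) (p := p) (d := d) n).range → k))
        = ((ρ' (Heis.mk α x w) :
          (↥(piN (k := k) (p := p) (d := d) n).range → k) →ₗ[k]
            (↥(piN (k := k) (p := p) (d := d) n).range → k)) ∘ₗ E) := by
      apply LinearMap.pi_ext
      intro z a
      have hsingle : (Pi.single z a : ↥(piN (k := k) (p := p) (d := d) n).range → k)
          = a • eVec n z := by
        funext z'
        by_cases h : z' = z
        · subst h; simp [eVec, Pi.single_apply]
        · simp [eVec, h, Pi.single_apply]
      rw [LinearMap.comp_apply, LinearMap.comp_apply, hsingle, map_smul, map_smul,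
        map_smul, map_smul, hρ α x w z, hEvec z, map_smul, map_smul, hEvec, hρ' α x w]
      rw [smul_smul, smul_smul, smul_smul, smul_smul]
      -- index alignment
      rw [mul_right_comm z (rngElt n w) (rngElt n t)]
      -- scalar identity
      have hF1 : y * (z : ThetaK2 k p d)
          = y' * ((z * rngElt n t : ↥(piN (k := k) (p := p) (d := d) n).range)
              : ThetaK2 k p d) := by
        push_cast
        show y * (z : ThetaK2 k p d)
            = y' * ((z : ThetaK2 k p d) * piN (k := k) (p := p) (d := d) n t)
        rw [hyu]
        have hAC : ∀ a b c : ThetaK2 k p d, a * b * c = b * (c * a) := fun a b c => by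
          rw [mul_comm a b, mul_assoc, mul_comm a c]
        exact hAC _ _ _
      have hF2 : kerElt n σ hσ w z * kerElt n σ hσ t (z * rngElt n w)
          = kerElt n σ hσ t z * kerElt n σ hσ w (z * rngElt n t) := by
        apply Subtype.ext
        show (w * σ z * (σ (z * rngElt n w))⁻¹)
            * (t * σ (z * rngElt n w) * (σ (z * rngElt n w * rngElt n t))⁻¹)
          = (t * σ z * (σ (z * rngElt n t))⁻¹)
            * (w * σ (z * rngElt n t) * (σ (z * rngElt n t * rngElt n w))⁻¹)
        rw [mul_right_comm z (rngElt n w) (rngElt n t)]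
        exact aux_ac w t (σ z) (σ (z * rngElt n w)) (σ (z * rngElt n t))
          (σ (z * rngElt n t * rngElt n w))
      have hscal : (α ^ n * (y * (z : ThetaK2 k p d)) x * χ (kerElt n σ hσ w z))
            * χ (kerElt n σ hσ t (z * rngElt n w))
          = χ (kerElt n σ hσ t z)
            * (α ^ n * (y' * ((z * rngElt n t : ↥(piN (k := k) (p := p) (d := d) n).range)
                : ThetaK2 k p d)) x * χ (kerElt n σ hσ w (z * rngElt n t))) := by
        rw [mul_assoc, ← map_mul, hF2, map_mul, hF1, mul_left_comm]
      have hscalk :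
          ((α ^ n * (y * (z : ThetaK2 k p d)) x * χ (kerElt n σ hσ w z) : kˣ) : k)
            * ((χ (kerElt n σ hσ t (z * rngElt n w)) : kˣ) : k)
          = ((χ (kerElt n σ hσ t z) : kˣ) : k)
            * ((α ^ n * (y' * ((z * rngElt n t :
                  ↥(piN (k := k) (p := p) (d := d) n).range) : ThetaK2 k p d)) x
                * χ (kerElt n σ hσ w (z * rngElt n t)) : kˣ) : k) := by
        rw [← Units.val_mul, ← Units.val_mul, hscal]
      rw [mul_assoc a, mul_assoc a, hscalk]
    rw [LinearEquiv.ofLinear_apply, LinearEquiv.ofLinear_apply]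
    exact LinearMap.congr_fun key v
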